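/- arXiv:1302.3965 — 2 statements merged into one kernel-verified Lean document; each statement's English description precedes it below -/
import Mathlib

section
/- Let X, Y be real Banach spaces, T ∈ B(X,Y) with a bounded homogeneous generalized inverse T^h : Y → X, and let δT ∈ B(X,Y) be such that T^h is quasi-additive on R(δT) and I_X + T^h∘δT is invertible in B(X,X). Then I_Y + δT∘T^h has a bounded homogeneous two-sided inverse, the map Φ = T^h ∘ (I_Y + δT T^h)^{-1} equals (I_X + T^h δT)^{-1} ∘ T^h, Φ is a bounded homogeneous operator, and R(Φ) = R(T^h), N(Φ) = N(T^h) (where N(Φ) = {y : Φ(y)=0}). -/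
open Metric Set

variable {X Y : Type*} [NormedAddCommGroup X] [NormedSpace ℝ X]
  [NormedAddCommGroup Y] [NormedSpace ℝ Y]

/-- `F` is a bounded homogeneous operator: `F (c • x) = c • F x` for all real `c`,
and `F` maps bounded sets to bounded sets (equivalently, `‖F x‖ ≤ M * ‖x‖`). -/
def BddHomOp (F : X → Y) : Prop :=
  (∀ (c : ℝ) (x : X), F (c • x) = c • F x) ∧ ∃ M : ℝ, ∀ x, ‖F x‖ ≤ M * ‖x‖

/-- The norm of a (homogeneous) map: `sup {‖F x‖ : ‖x‖ = 1}`. -/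
noncomputable def hnorm (F : X → Y) : ℝ :=
  sSup ((fun x => ‖F x‖) '' {x : X | ‖x‖ = 1})

/-- `F` is quasi-additive on the subset `M`. -/
def QuasiAdditiveOn (F : X → Y) (M : Set X) : Prop :=
  ∀ x : X, ∀ z ∈ M, F (x + z) = F x + F z

/-- `S` is a bounded homogeneous generalized inverse of `T`: `T S T = T` and `S T S = S`. -/
def GenInv (T : X →L[ℝ] Y) (S : Y → X) : Prop :=
  BddHomOp S ∧ (∀ x, T (S (T x)) = T x) ∧ (∀ y, S (T (S y)) = S y)

/-- A subset `V` is Chebyshev: every point has a unique nearest point in `V`. -/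
def IsChebyshev (V : Set X) : Prop :=
  ∀ x : X, ∃! v, v ∈ V ∧ ‖x - v‖ = Metric.infDist x V

/-- `p` is the metric projector onto `V`: `p x ∈ V` is a nearest point to `x` in `V`. -/
def IsMetricProjOn (V : Set X) (p : X → X) : Prop :=
  ∀ x, p x ∈ V ∧ ‖x - p x‖ = Metric.infDist x V

/-- `TH` is a quasi-linear projector generalized inverse of `T`. -/
def QLPGenInv (T : X →L[ℝ] Y) (TH : Y → X) : Prop :=
  BddHomOp TH ∧ (∀ x, T (TH (T x)) = T x) ∧ (∀ y, TH (T (TH y)) = TH y) ∧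
  (∃ P : X →L[ℝ] X, (∀ x, P (P x) = P x) ∧ Set.range ⇑P = {x : X | T x = 0} ∧
    ∀ x, TH (T x) = x - P x) ∧
  (∃ Q : Y → Y, BddHomOp Q ∧ (∀ y, Q (Q y) = Q y) ∧ QuasiAdditiveOn Q (Set.range Q) ∧
    Set.range Q = Set.range ⇑T ∧ ∀ y, T (TH y) = Q y)

/-! The Sherman–Morrison–Woodbury formula `(I + δT Tʰ)⁻¹ = I - δT (I + Tʰ δT)⁻¹ Tʰ` survives the
loss of linearity of `Tʰ`: its verification only ever applies `Tʰ` to vectors of the form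
`y ± δT x`, and quasi-additivity on `R(δT)` (with homogeneity for the sign) splits these as if
`Tʰ` were additive. Applying `Tʰ` to `Ψ y + δT (Tʰ (Ψ y)) = y` gives `(I + Tʰ δT) (Tʰ (Ψ y)) = Tʰ y`
for every right inverse `Ψ`, whence `Tʰ Ψ = (I + Tʰ δT)⁻¹ Tʰ`; range and kernel follow because `Ψ`
is onto and `(I + Tʰ δT)⁻¹` is injective. -/

namespace BddHomOp

variable {Z : Type*} [NormedAddCommGroup Z] [NormedSpace ℝ Z]

theorem map_neg {F : X → Y} (hF : BddHomOp F) (x : X) : F (-x) = -F x := by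
  simpa using hF.1 (-1) x

theorem sub {F G : X → Y} (hF : BddHomOp F) (hG : BddHomOp G) :
    BddHomOp (fun x => F x - G x) := by
  obtain ⟨hFs, M, hM⟩ := hF
  obtain ⟨hGs, N, hN⟩ := hG
  refine ⟨fun c x => by simp only [hFs, hGs, smul_sub], M + N, fun x => ?_⟩
  calc ‖F x - G x‖ ≤ ‖F x‖ + ‖G x‖ := norm_sub_le _ _
    _ ≤ M * ‖x‖ + N * ‖x‖ := add_le_add (hM x) (hN x)
    _ = (M + N) * ‖x‖ := by ring

theorem clm_comp {F : X → Y} (hF : BddHomOp F) (L : Y →L[ℝ] Z) :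
    BddHomOp (fun x => L (F x)) := by
  obtain ⟨hFs, M, hM⟩ := hF
  refine ⟨fun c x => by simp only [hFs, map_smul], ‖L‖ * M, fun x => ?_⟩
  calc ‖L (F x)‖ ≤ ‖L‖ * ‖F x‖ := L.le_opNorm _
    _ ≤ ‖L‖ * (M * ‖x‖) := by gcongr; exact hM x
    _ = ‖L‖ * M * ‖x‖ := by ring

end BddHomOp

theorem bddHomOp_id : BddHomOp (fun x : X => x) :=
  ⟨fun _ _ => rfl, 1, fun x => (one_mul ‖x‖).ge⟩

namespace Units

theorem clm_inv_apply_apply (A : (X →L[ℝ] X)ˣ) (x : X) :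
    (↑A⁻¹ : X →L[ℝ] X) ((A : X →L[ℝ] X) x) = x :=
  DFunLike.congr_fun A.inv_mul x

theorem clm_apply_inv_apply (A : (X →L[ℝ] X)ˣ) (x : X) :
    (A : X →L[ℝ] X) ((↑A⁻¹ : X →L[ℝ] X) x) = x :=
  DFunLike.congr_fun A.mul_inv x

theorem clm_inv_injective (A : (X →L[ℝ] X)ˣ) : Function.Injective (↑A⁻¹ : X →L[ℝ] X) :=
  Function.LeftInverse.injective A.clm_apply_inv_apply

end Units

section Woodbury

variable {S : Y → X} {L : X →L[ℝ] Y} {A : (X →L[ℝ] X)ˣ}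

/-- Woodbury's `I - L (I + S L)⁻¹ S` for `(I + L S)⁻¹`, where `A` stands for `I + S L`. -/
def woodburyInv (S : Y → X) (L : X →L[ℝ] Y) (A : (X →L[ℝ] X)ˣ) (y : Y) : Y :=
  y - L ((↑A⁻¹ : X →L[ℝ] X) (S y))

theorem bddHomOp_woodburyInv (hS : BddHomOp S) : BddHomOp (woodburyInv S L A) :=
  bddHomOp_id.sub ((hS.clm_comp _).clm_comp L)

variable (hq : QuasiAdditiveOn S (range L)) (hA : ∀ x, (A : X →L[ℝ] X) x = x + S (L x))
include hq hA

theorem apply_woodburyInv (hS : BddHomOp S) (y : Y) :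
    S (woodburyInv S L A y) = (↑A⁻¹ : X →L[ℝ] X) (S y) := by
  set x := (↑A⁻¹ : X →L[ℝ] X) (S y)
  have hSLx : S (L x) = S y - x :=
    eq_sub_of_add_eq' (by rw [← hA, A.clm_apply_inv_apply])
  calc S (woodburyInv S L A y) = S (y + L (-x)) := by rw [woodburyInv, map_neg, sub_eq_add_neg]
    _ = S y - S (L x) := by rw [hq y _ (mem_range_self _), map_neg, hS.map_neg, sub_eq_add_neg]
    _ = x := by rw [hSLx]; abel

theorem woodburyInv_add_apply (hS : BddHomOp S) (y : Y) :
    woodburyInv S L A y + L (S (woodburyInv S L A y)) = y := by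
  rw [apply_woodburyInv hq hA hS, woodburyInv, sub_add_cancel]

theorem woodburyInv_apply_add (y : Y) : woodburyInv S L A (y + L (S y)) = y := by
  rw [woodburyInv, hq y _ (mem_range_self _), ← hA, A.clm_inv_apply_apply, add_sub_cancel_right]

theorem apply_eq_of_rightInverse {Ψ : Y → Y} (hΨ : ∀ y, Ψ y + L (S (Ψ y)) = y) (y : Y) :
    S (Ψ y) = (↑A⁻¹ : X →L[ℝ] X) (S y) := by
  rw [← A.clm_inv_apply_apply (S (Ψ y)), hA, ← hq _ _ (mem_range_self _), hΨ]

end Woodbury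

theorem stmt_5_general (T δT : X →L[ℝ] Y)
    (Th : Y → X) (hTh : GenInv T Th)
    (hq : QuasiAdditiveOn Th (Set.range ⇑δT))
    (A : (X →L[ℝ] X)ˣ) (hA : ∀ x, (A : X →L[ℝ] X) x = x + Th (δT x)) :
    (∃ Ψ : Y → Y, BddHomOp Ψ ∧ (∀ y, Ψ y + δT (Th (Ψ y)) = y) ∧
      (∀ y, Ψ (y + δT (Th y)) = y)) ∧
    ∀ Ψ : Y → Y, ((∀ y, Ψ y + δT (Th (Ψ y)) = y) ∧ (∀ y, Ψ (y + δT (Th y)) = y)) →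
      ((∀ y, Th (Ψ y) = (↑A⁻¹ : X →L[ℝ] X) (Th y)) ∧
       BddHomOp (fun y => Th (Ψ y)) ∧
       Set.range (fun y => Th (Ψ y)) = Set.range Th ∧
       {y | Th (Ψ y) = 0} = {y | Th y = 0}) := by
  have hS : BddHomOp Th := hTh.1
  refine ⟨⟨woodburyInv Th δT A, bddHomOp_woodburyInv hS, woodburyInv_add_apply hq hA hS,
    woodburyInv_apply_add hq hA⟩, fun Ψ ⟨hright, hleft⟩ => ?_⟩
  have hThΨ := apply_eq_of_rightInverse hq hA hright
  have hΦ : (fun y => Th (Ψ y)) = fun y => (↑A⁻¹ : X →L[ℝ] X) (Th y) := funext hThΨ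
  refine ⟨hThΨ, hΦ ▸ hS.clm_comp _, ?_, ?_⟩
  · exact (Function.LeftInverse.surjective hleft).range_comp Th
  · ext y
    change Th (Ψ y) = 0 ↔ Th y = 0
    rw [hThΨ, A.clm_inv_injective.eq_iff' (map_zero _)]

theorem stmt_5 [CompleteSpace X] [CompleteSpace Y] (T δT : X →L[ℝ] Y)
    (Th : Y → X) (hTh : GenInv T Th)
    (hq : QuasiAdditiveOn Th (Set.range ⇑δT))
    (A : (X →L[ℝ] X)ˣ) (hA : ∀ x, (A : X →L[ℝ] X) x = x + Th (δT x)) :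
    (∃ Ψ : Y → Y, BddHomOp Ψ ∧ (∀ y, Ψ y + δT (Th (Ψ y)) = y) ∧
      (∀ y, Ψ (y + δT (Th y)) = y)) ∧
    ∀ Ψ : Y → Y, ((∀ y, Ψ y + δT (Th (Ψ y)) = y) ∧ (∀ y, Ψ (y + δT (Th y)) = y)) →
      ((∀ y, Th (Ψ y) = (↑A⁻¹ : X →L[ℝ] X) (Th y)) ∧
       BddHomOp (fun y => Th (Ψ y)) ∧
       Set.range (fun y => Th (Ψ y)) = Set.range Th ∧
       {y | Th (Ψ y) = 0} = {y | Th y = 0}) :=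
  stmt_5_general T δT Th hTh hq A hA
end

section
/- Let X, Y be real Banach spaces and T ∈ B(X,Y) with T ≠ 0. Then T has a bounded quasi-linear generalized inverse T^h : Y → X (a bounded homogeneous generalized inverse that is quasi-additive on R(T)) if and only if there exist a bounded linear projector P ∈ B(X,X) with R(P) = N(T) and a bounded quasi-linear projector Q : Y → Y with R(Q) = R(T). -/
open Metric Set

variable {X Y : Type*} [NormedAddCommGroup X] [NormedSpace ℝ X]
  [NormedAddCommGroup Y] [NormedSpace ℝ Y]

/-!
If `T^h` is a generalized inverse that is quasi-additive on `R(T)`, then `x ↦ T^h (T x)` is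
additive, hence `P = I - T^h T` is a bounded linear projector onto `N(T)`, and `Q = T T^h` is a
quasi-linear projector onto `R(T)`.

Conversely, quasi-additivity gives `‖Q y - y‖ ≤ (M + 1) ‖y - u‖` for every `u ∈ R(Q)`, so
`R(T) = R(Q)` is closed. Then `T` maps the closed complement `N(P)` of `N(T)` bijectively onto
the Banach space `R(T)`, the open mapping theorem yields a bounded linear inverse `S`, and
`T^h = S ∘ Q` is the required generalized inverse.
-/

namespace BddHomOp

variable {Z : Type*} [NormedAddCommGroup Z] [NormedSpace ℝ Z] {F : X → Y}

lemma map_zero (hF : BddHomOp F) : F 0 = 0 := by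
  simpa using hF.1 0 0

lemma exists_nonneg_bound (hF : BddHomOp F) : ∃ M, 0 ≤ M ∧ ∀ x, ‖F x‖ ≤ M * ‖x‖ := by
  obtain ⟨M, hM⟩ := hF.2
  exact ⟨max M 0, le_max_right M 0, fun x =>
    (hM x).trans (mul_le_mul_of_nonneg_right (le_max_left M 0) (norm_nonneg x))⟩

lemma comp_continuousLinearMap (hF : BddHomOp F) (A : Z →L[ℝ] X) : BddHomOp (F ∘ A) := by
  obtain ⟨M, hM0, hM⟩ := hF.exists_nonneg_bound
  refine ⟨fun c z => by simp only [Function.comp_apply, map_smul, hF.1], M * ‖A‖, fun z => ?_⟩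
  calc ‖F (A z)‖ ≤ M * ‖A z‖ := hM (A z)
    _ ≤ M * (‖A‖ * ‖z‖) := mul_le_mul_of_nonneg_left (A.le_opNorm z) hM0
    _ = M * ‖A‖ * ‖z‖ := (mul_assoc _ _ _).symm

lemma continuousLinearMap_comp (hF : BddHomOp F) (A : Y →L[ℝ] Z) : BddHomOp (A ∘ F) := by
  obtain ⟨M, hM0, hM⟩ := hF.exists_nonneg_bound
  refine ⟨fun c x => by simp only [Function.comp_apply, hF.1, map_smul], ‖A‖ * M, fun x => ?_⟩
  calc ‖A (F x)‖ ≤ ‖A‖ * ‖F x‖ := A.le_opNorm (F x)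
    _ ≤ ‖A‖ * (M * ‖x‖) := mul_le_mul_of_nonneg_left (hM x) (norm_nonneg A)
    _ = ‖A‖ * M * ‖x‖ := (mul_assoc _ _ _).symm

noncomputable def toContinuousLinearMap (hF : BddHomOp F)
    (hadd : ∀ x x', F (x + x') = F x + F x') : X →L[ℝ] Y :=
  LinearMap.mkContinuousOfExistsBound ⟨⟨F, hadd⟩, hF.1⟩ hF.2

lemma isClosed_range {Q : Y → Y} (hQ : BddHomOp Q) (hQQ : ∀ y, Q (Q y) = Q y)
    (hqa : QuasiAdditiveOn Q (range Q)) : IsClosed (range Q) := by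
  obtain ⟨M, hM0, hM⟩ := hQ.exists_nonneg_bound
  refine closure_subset_iff_isClosed.mp fun y hy => ⟨y, eq_of_forall_dist_le fun ε hε => ?_⟩
  obtain ⟨_, ⟨w, rfl⟩, hyw⟩ := Metric.mem_closure_iff.mp hy (ε / (M + 1)) (by positivity)
  have hsplit : Q y = Q (y - Q w) + Q w := by
    simpa only [sub_add_cancel, hQQ] using hqa (y - Q w) (Q w) ⟨w, rfl⟩
  calc dist (Q y) y = ‖Q (y - Q w) - (y - Q w)‖ := by
        rw [dist_eq_norm, hsplit]; congr 1; abel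
    _ ≤ ‖Q (y - Q w)‖ + ‖y - Q w‖ := norm_sub_le _ _
    _ ≤ (M + 1) * dist y (Q w) := by rw [dist_eq_norm]; linarith [hM (y - Q w)]
    _ ≤ (M + 1) * (ε / (M + 1)) := by gcongr
    _ = ε := by field_simp

end BddHomOp

/-- `T` restricted to `ker P` is a bijection onto the Banach space `range T`; its inverse is
bounded by the open mapping theorem. -/
lemma exists_rightInverse_on_range [CompleteSpace X] [CompleteSpace Y] {T : X →L[ℝ] Y}
    {P : X →L[ℝ] X}
    (hPP : ∀ x, P (P x) = P x) (hP : range P = {x | T x = 0}) (hT : IsClosed (range T)) :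
    ∃ S : LinearMap.range (T : X →ₗ[ℝ] Y) →L[ℝ] X, ∀ y, T (S y) = (y : Y) := by
  let K := LinearMap.ker (P : X →ₗ[ℝ] X)
  have : CompleteSpace (LinearMap.range (T : X →ₗ[ℝ] Y)) :=
    (LinearMap.coe_range (T : X →ₗ[ℝ] Y) ▸ hT).completeSpace_coe
  have : CompleteSpace K := (ContinuousLinearMap.isClosed_ker P).completeSpace_coe
  let f : K →L[ℝ] LinearMap.range (T : X →ₗ[ℝ] Y) :=
    (T.comp K.subtypeL).codRestrict _ fun x => ⟨x, rfl⟩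
  have hinj : Function.Injective f := by
    refine (injective_iff_map_eq_zero f).mpr fun ⟨m, hm⟩ hfm => Subtype.ext ?_
    obtain ⟨w, rfl⟩ : m ∈ range P := hP ▸ congrArg Subtype.val hfm
    change P w = 0
    rw [← hPP w]
    exact hm
  have hsurj : Function.Surjective f := by
    refine fun ⟨_, x, rfl⟩ => ⟨⟨x - P x, ?_⟩, Subtype.ext ?_⟩
    · simp [K, hPP]
    · have hTP : T (P x) = 0 := show P x ∈ {x | T x = 0} from hP ▸ mem_range_self x
      change T (x - P x) = T x
      rw [map_sub, hTP, sub_zero]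
  let e := ContinuousLinearEquiv.ofBijective f (LinearMap.ker_eq_bot.mpr hinj)
    (LinearMap.range_eq_top.mpr hsurj)
  refine ⟨K.subtypeL.comp (e.symm : _ →L[ℝ] K), fun y => ?_⟩
  exact congrArg Subtype.val (e.apply_symm_apply y)

namespace GenInv

variable {T : X →L[ℝ] Y} {Th : Y → X}

lemma exists_linearProjector_onto_ker (hTh : GenInv T Th)
    (hqa : QuasiAdditiveOn Th (range T)) :
    ∃ P : X →L[ℝ] X, (∀ x, P (P x) = P x) ∧ range P = {x | T x = 0} := by
  obtain ⟨hbdd, hTThT, -⟩ := hTh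
  have hadd : ∀ x x', Th (T (x + x')) = Th (T x) + Th (T x') := fun x x' => by
    rw [map_add]; exact hqa (T x) (T x') (mem_range_self x')
  let P := ContinuousLinearMap.id ℝ X - (hbdd.comp_continuousLinearMap T).toContinuousLinearMap hadd
  have hP : ∀ x, P x = x - Th (T x) := fun x => rfl
  have hTP : ∀ x, T (P x) = 0 := fun x => by rw [hP, map_sub, hTThT, sub_self]
  have hPker : ∀ x, T x = 0 → P x = x := fun x hx => by rw [hP, hx, hbdd.map_zero, sub_zero]
  refine ⟨P, fun x => hPker _ (hTP x), Set.ext fun x => ⟨?_, fun hx => ⟨x, hPker x hx⟩⟩⟩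
  rintro ⟨w, rfl⟩
  exact hTP w

lemma exists_quasiLinearProjector_onto_range (hTh : GenInv T Th)
    (hqa : QuasiAdditiveOn Th (range T)) :
    ∃ Q : Y → Y, BddHomOp Q ∧ (∀ y, Q (Q y) = Q y) ∧
      QuasiAdditiveOn Q (range Q) ∧ range Q = range T := by
  obtain ⟨hbdd, hTThT, hThTTh⟩ := hTh
  refine ⟨T ∘ Th, hbdd.continuousLinearMap_comp T, fun y => congrArg T (hThTTh y), ?_, ?_⟩
  · rintro y _ ⟨w, rfl⟩
    simp only [Function.comp_apply, hqa y _ (mem_range_self _), map_add]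
  · refine (range_comp_subset_range Th T).antisymm ?_
    rintro _ ⟨x, rfl⟩
    exact ⟨T x, hTThT x⟩

end GenInv

/-- The generalized inverse is `S ∘ Q`. -/
lemma exists_genInv_of_rightInverse {T : X →L[ℝ] Y} (S : LinearMap.range (T : X →ₗ[ℝ] Y) →L[ℝ] X)
    (hTS : ∀ y, T (S y) = (y : Y)) {Q : Y → Y} (hQ : BddHomOp Q) (hQQ : ∀ y, Q (Q y) = Q y)
    (hqa : QuasiAdditiveOn Q (range Q)) (hQT : range Q = range T) :
    ∃ Th : Y → X, GenInv T Th ∧ QuasiAdditiveOn Th (range T) := by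
  have hQmem : ∀ y, Q y ∈ LinearMap.range (T : X →ₗ[ℝ] Y) := fun y => by
    obtain ⟨x, hx⟩ : Q y ∈ range T := hQT ▸ mem_range_self y
    exact ⟨x, hx⟩
  let Th : Y → X := fun y => S ⟨Q y, hQmem y⟩
  have hTTh : ∀ y, T (Th y) = Q y := fun y => hTS _
  have hThQ : ∀ {y} {r : LinearMap.range (T : X →ₗ[ℝ] Y)}, Q y = r → Th y = S r :=
    fun h => congrArg S (Subtype.ext h)
  have hbdd : BddHomOp Th := by
    obtain ⟨M, -, hM⟩ := hQ.exists_nonneg_bound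
    refine ⟨fun c y => ?_, ‖S‖ * M, fun y => ?_⟩
    · exact (hThQ (r := c • ⟨Q y, hQmem y⟩) (hQ.1 c y)).trans (map_smul S c _)
    · calc ‖Th y‖ ≤ ‖S‖ * ‖Q y‖ := S.le_opNorm _
        _ ≤ ‖S‖ * (M * ‖y‖) := mul_le_mul_of_nonneg_left (hM y) (norm_nonneg S)
        _ = ‖S‖ * M * ‖y‖ := (mul_assoc _ _ _).symm
  have hQfix : ∀ x, Q (T x) = T x := fun x => by
    obtain ⟨y, hy⟩ : T x ∈ range Q := hQT ▸ mem_range_self x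
    rw [← hy, hQQ]
  refine ⟨Th, ⟨hbdd, fun x => by rw [hTTh, hQfix], fun y => hThQ (by rw [hTTh, hQQ])⟩, ?_⟩
  intro y z hz
  exact (hThQ (r := ⟨Q y, hQmem y⟩ + ⟨Q z, hQmem z⟩) (hqa y z (hQT ▸ hz))).trans (map_add S _ _)

theorem stmt_12_general [CompleteSpace X] [CompleteSpace Y] (T : X →L[ℝ] Y) :
    (∃ Th : Y → X, GenInv T Th ∧ QuasiAdditiveOn Th (Set.range ⇑T)) ↔
      ((∃ P : X →L[ℝ] X, (∀ x, P (P x) = P x) ∧ Set.range ⇑P = {x : X | T x = 0}) ∧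
       (∃ Q : Y → Y, BddHomOp Q ∧ (∀ y, Q (Q y) = Q y) ∧
         QuasiAdditiveOn Q (Set.range Q) ∧ Set.range Q = Set.range ⇑T)) := by
  constructor
  · rintro ⟨Th, hTh, hqa⟩
    exact ⟨hTh.exists_linearProjector_onto_ker hqa, hTh.exists_quasiLinearProjector_onto_range hqa⟩
  · rintro ⟨⟨P, hPP, hP⟩, Q, hQ, hQQ, hqa, hQT⟩
    have hT : IsClosed (range T) := hQT ▸ hQ.isClosed_range hQQ hqa
    obtain ⟨S, hTS⟩ := exists_rightInverse_on_range hPP hP hT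
    exact exists_genInv_of_rightInverse S hTS hQ hQQ hqa hQT

theorem stmt_12 [CompleteSpace X] [CompleteSpace Y] (T : X →L[ℝ] Y) (hT : T ≠ 0) :
    (∃ Th : Y → X, GenInv T Th ∧ QuasiAdditiveOn Th (Set.range ⇑T)) ↔
      ((∃ P : X →L[ℝ] X, (∀ x, P (P x) = P x) ∧ Set.range ⇑P = {x : X | T x = 0}) ∧
       (∃ Q : Y → Y, BddHomOp Q ∧ (∀ y, Q (Q y) = Q y) ∧
         QuasiAdditiveOn Q (Set.range Q) ∧ Set.range Q = Set.range ⇑T)) :=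
  stmt_12_general T
end
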